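/- Let M ∈ ℝ^{3×3} be symmetric, let k₁, γ > 0, and let R̃, R̂ : ℝ → ℝ^{3×3} and b̃ : ℝ → ℝ³ be differentiable with R̃(t), R̂(t) ∈ SO(3) for all t, satisfying Ṙ̃ = −[k₁·Υ(R̃M) − R̂ᵀ b̃]× R̃ and ḃ̃ = −γ·R̂·Υ(R̃M). Then the function C(t) = (1/2)·Tr((I₃ − R̃(t))M) + (1/(2γ))·‖b̃(t)‖² satisfies Ċ(t) = −k₁·‖Υ(R̃(t)M)‖² for all t; in particular C is nonincreasing. -/

import Mathlib

/-! Along the flow, `d/dt Tr((I - R̃)M)/2 = Tr([ω]× R̃M)/2 = -ω · Υ(R̃M)`, because the trace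
pairing of a skew matrix with `A` only sees `P_a(A)`. With `ω = k₁Υ - R̂ᵀb̃`, the cross term
`(R̂ᵀb̃) · Υ` cancels exactly against `b̃ · ḃ̃ / γ = -b̃ · R̂Υ`, leaving `-k₁‖Υ‖²`. -/

open Matrix Filter

noncomputable section

/-- Skew-symmetric matrix of a vector: `skew ω *ᵥ v = ω ×₃ v`. -/
def skew (ω : Fin 3 → ℝ) : Matrix (Fin 3) (Fin 3) ℝ :=
  !![0, -ω 2, ω 1; ω 2, 0, -ω 0; -ω 1, ω 0, 0]

/-- Inverse of `skew` on skew-symmetric matrices. -/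
def vex (M : Matrix (Fin 3) (Fin 3) ℝ) : Fin 3 → ℝ :=
  ![M 2 1, M 0 2, M 1 0]

/-- Anti-symmetric projection `P_a(M) = (M - Mᵀ)/2`. -/
def Pa (M : Matrix (Fin 3) (Fin 3) ℝ) : Matrix (Fin 3) (Fin 3) ℝ :=
  (1 / 2 : ℝ) • (M - Mᵀ)

/-- `Υ(M) = vex (P_a M)`. -/
def Upsilon (M : Matrix (Fin 3) (Fin 3) ℝ) : Fin 3 → ℝ := vex (Pa M)

/-- `R ∈ SO(3)`. -/
def SO3 (R : Matrix (Fin 3) (Fin 3) ℝ) : Prop :=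
  R * Rᵀ = 1 ∧ Rᵀ * R = 1 ∧ R.det = 1

/-- `‖R‖_I = Tr(I₃ - R)/4`. -/
def normI (R : Matrix (Fin 3) (Fin 3) ℝ) : ℝ := Matrix.trace (1 - R) / 4

/-- Squared Euclidean norm of a vector of `ℝ³`. -/
def sqnorm (v : Fin 3 → ℝ) : ℝ := ∑ i, v i ^ 2

/-- Entrywise derivative of a matrix-valued function. -/
def HasMatDerivAt (R : ℝ → Matrix (Fin 3) (Fin 3) ℝ)
    (R' : Matrix (Fin 3) (Fin 3) ℝ) (t : ℝ) : Prop :=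
  ∀ i j, HasDerivAt (fun s => R s i j) (R' i j) t

theorem sqnorm_eq_dotProduct (v : Fin 3 → ℝ) : sqnorm v = v ⬝ᵥ v := by
  simp only [sqnorm, dotProduct, sq]

theorem sqnorm_nonneg (v : Fin 3 → ℝ) : 0 ≤ sqnorm v :=
  Finset.sum_nonneg fun i _ => sq_nonneg (v i)

theorem trace_skew_mul (ω : Fin 3 → ℝ) (A : Matrix (Fin 3) (Fin 3) ℝ) :
    trace (skew ω * A) = -2 * (ω ⬝ᵥ Upsilon A) := by
  simp only [trace, diag, skew, Upsilon, vex, Pa, mul_apply, dotProduct, Fin.sum_univ_three,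
    Matrix.smul_apply, Matrix.sub_apply, transpose_apply, smul_eq_mul, of_apply, cons_val',
    cons_val_zero, cons_val_one, cons_val_two, head_cons, head_fin_const, tail_cons, empty_val',
    cons_val_fin_one]
  ring

theorem HasMatDerivAt.const_sub {R : ℝ → Matrix (Fin 3) (Fin 3) ℝ}
    {R' : Matrix (Fin 3) (Fin 3) ℝ} {t : ℝ} (h : HasMatDerivAt R R' t)
    (A : Matrix (Fin 3) (Fin 3) ℝ) : HasMatDerivAt (fun s => A - R s) (-R') t :=
  fun i j => (h i j).const_sub (A i j)

theorem HasMatDerivAt.hasDerivAt_trace_mul {R : ℝ → Matrix (Fin 3) (Fin 3) ℝ}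
    {R' : Matrix (Fin 3) (Fin 3) ℝ} {t : ℝ} (h : HasMatDerivAt R R' t)
    (M : Matrix (Fin 3) (Fin 3) ℝ) :
    HasDerivAt (fun s => trace (R s * M)) (trace (R' * M)) t := by
  simp only [trace, diag, mul_apply]
  exact HasDerivAt.fun_sum fun i _ => HasDerivAt.fun_sum fun j _ => (h i j).mul_const _

theorem HasDerivAt.sqnorm {b : ℝ → Fin 3 → ℝ} {b' : Fin 3 → ℝ} {t : ℝ}
    (h : HasDerivAt b b' t) :
    HasDerivAt (fun s => sqnorm (b s)) (2 * (b t ⬝ᵥ b')) t := by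
  refine (HasDerivAt.fun_sum fun i _ => (hasDerivAt_pi.1 h i).fun_pow 2).congr_deriv ?_
  simp only [dotProduct, Finset.mul_sum, Nat.cast_ofNat, Nat.add_one_sub_one, pow_one, mul_assoc]

theorem lyapunov_decrease_general (M : Matrix (Fin 3) (Fin 3) ℝ)
    (k1 γ : ℝ) (hk1 : 0 < k1) (hγ : 0 < γ)
    (Rt Rhat : ℝ → Matrix (Fin 3) (Fin 3) ℝ) (btilde : ℝ → Fin 3 → ℝ)
    (hRt : ∀ t, HasMatDerivAt Rt
      (-(skew (k1 • Upsilon (Rt t * M) - (Rhat t)ᵀ *ᵥ btilde t) * Rt t)) t)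
    (hb : ∀ t, HasDerivAt btilde (-(γ • (Rhat t *ᵥ Upsilon (Rt t * M)))) t) :
    (∀ t, HasDerivAt
      (fun s => Matrix.trace ((1 - Rt s) * M) / 2 + 1 / (2 * γ) * sqnorm (btilde s))
      (-(k1 * sqnorm (Upsilon (Rt t * M)))) t) ∧
    Antitone (fun t => Matrix.trace ((1 - Rt t) * M) / 2 + 1 / (2 * γ) * sqnorm (btilde t)) := by
  have hderiv : ∀ t, HasDerivAt
      (fun s => Matrix.trace ((1 - Rt s) * M) / 2 + 1 / (2 * γ) * sqnorm (btilde s))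
      (-(k1 * sqnorm (Upsilon (Rt t * M)))) t := by
    intro t
    have htrace := (((hRt t).const_sub 1).hasDerivAt_trace_mul M).div_const 2
    have hnorm := (hb t).sqnorm.const_mul (1 / (2 * γ))
    refine (htrace.add hnorm).congr_deriv ?_
    simp only [neg_mul, neg_neg, Matrix.mul_assoc, trace_skew_mul]
    rw [dotProduct_neg, dotProduct_smul, dotProduct_mulVec, ← mulVec_transpose,
      sub_dotProduct, smul_dotProduct, sqnorm_eq_dotProduct, smul_eq_mul, smul_eq_mul]
    field_simp
    ring
  exact ⟨hderiv, antitone_of_hasDerivAt_nonpos hderiv fun t =>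
    neg_nonpos.2 (mul_nonneg hk1.le (sqnorm_nonneg _))⟩

theorem lyapunov_decrease (M : Matrix (Fin 3) (Fin 3) ℝ) (hMsym : M.IsSymm)
    (k1 γ : ℝ) (hk1 : 0 < k1) (hγ : 0 < γ)
    (Rt Rhat : ℝ → Matrix (Fin 3) (Fin 3) ℝ) (btilde : ℝ → Fin 3 → ℝ)
    (hSO : ∀ t, SO3 (Rt t)) (hSOhat : ∀ t, SO3 (Rhat t))
    (hRhatDiff : ∀ i j, Differentiable ℝ fun t => Rhat t i j)
    (hRt : ∀ t, HasMatDerivAt Rt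
      (-(skew (k1 • Upsilon (Rt t * M) - (Rhat t)ᵀ *ᵥ btilde t) * Rt t)) t)
    (hb : ∀ t, HasDerivAt btilde (-(γ • (Rhat t *ᵥ Upsilon (Rt t * M)))) t) :
    (∀ t, HasDerivAt
      (fun s => Matrix.trace ((1 - Rt s) * M) / 2 + 1 / (2 * γ) * sqnorm (btilde s))
      (-(k1 * sqnorm (Upsilon (Rt t * M)))) t) ∧
    Antitone (fun t => Matrix.trace ((1 - Rt t) * M) / 2 + 1 / (2 * γ) * sqnorm (btilde t)) :=
  lyapunov_decrease_general M k1 γ hk1 hγ Rt Rhat btilde hRt hb
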